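/- Fix m ≥ 1 and set M = 2^m. Define the M×M left-shift matrix S⁻ = Σ_{j=1}^{M−1} |j−1⟩⟨j| and right-shift matrix S⁺ = Σ_{j=1}^{M−1} |j⟩⟨j−1|. Then S⁻ = Σ_{j=1}^{m} I₂^{⊗(m−j)} ⊗ σ₀₁ ⊗ σ₁₀^{⊗(j−1)} and S⁺ = Σ_{j=1}^{m} I₂^{⊗(m−j)} ⊗ σ₁₀ ⊗ σ₀₁^{⊗(j−1)}; in particular S⁺ = (S⁻)†. Moreover the restricted identity I^r := Σ_{j=1}^{M−1} |j⟩⟨j| satisfies I^r = I₂^{⊗m} − σ₀₀^{⊗m}. -/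

import Mathlib

open Matrix
open scoped Kronecker Matrix

/-- The single-qubit matrix `σ_{ab} = |a⟩⟨b|`. -/
noncomputable def sigma (a b : Fin 2) : Matrix (Fin 2) (Fin 2) ℂ :=
  Matrix.single a b 1

/-- `kronList n L` is the Kronecker product `L 0 ⊗ L 1 ⊗ ⋯ ⊗ L (n−1)` of `n`
`2×2` matrices, with `L 0` the leftmost factor, realized as a `2^n × 2^n` matrix. -/
noncomputable def kronList : (n : ℕ) → (ℕ → Matrix (Fin 2) (Fin 2) ℂ) →
    Matrix (Fin (2 ^ n)) (Fin (2 ^ n)) ℂ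
  | 0, _ => 1
  | n + 1, L =>
    Matrix.reindex (finProdFinEquiv.trans (finCongr (by ring)))
      (finProdFinEquiv.trans (finCongr (by ring)))
      ((L 0) ⊗ₖ kronList n (fun i => L (i + 1)))

/-- The left-shift matrix `S⁻ = Σ_{j=1}^{M−1} |j−1⟩⟨j|`. -/
noncomputable def Sminus (M : ℕ) : Matrix (Fin M) (Fin M) ℂ :=
  ∑ j : Fin M,
    if h : (j : ℕ) = 0 then 0
    else Matrix.single ⟨(j : ℕ) - 1, by have := j.isLt; omega⟩ j 1

/-- The right-shift matrix `S⁺ = Σ_{j=1}^{M−1} |j⟩⟨j−1|`. -/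
noncomputable def Splus (M : ℕ) : Matrix (Fin M) (Fin M) ℂ :=
  ∑ j : Fin M,
    if h : (j : ℕ) = 0 then 0
    else Matrix.single j ⟨(j : ℕ) - 1, by have := j.isLt; omega⟩ 1

/-- The restricted identity `I^r = Σ_{j=1}^{M−1} |j⟩⟨j|`. -/
noncomputable def Ir (M : ℕ) : Matrix (Fin M) (Fin M) ℂ :=
  ∑ j : Fin M,
    if h : (j : ℕ) = 0 then 0 else Matrix.single j j 1

/-!
Split an index of `ℂ^(2^(m+1))` into its leading qubit and the remaining `m` qubits. The shift
then acts as `I₂ ⊗ S⁻` inside each half, plus the single carry from the top `|1⋯1⟩` of the lower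
half to the bottom `|0⋯0⟩` of the upper half, which is `σ₀₁ ⊗ σ₁₀^{⊗m}`; induction on `m` gives
the sum for `S⁻`. Taking adjoints (`σ₀₁† = σ₁₀`) gives `S⁺`, and `I^r` is the identity with
`|0⋯0⟩⟨0⋯0| = σ₀₀^{⊗m}` removed.
-/

lemma Sminus_apply (M : ℕ) (i j : Fin M) :
    Sminus M i j = if (i : ℕ) + 1 = j then 1 else 0 := by
  simp only [Sminus, Matrix.sum_apply]
  rw [Finset.sum_eq_single j (fun b _ hb => by split_ifs <;> simp [hb]) (by simp)]
  split_ifs <;> simp_all [single_apply, Fin.ext_iff] <;> omega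

lemma Splus_apply (M : ℕ) (i j : Fin M) :
    Splus M i j = if (j : ℕ) + 1 = i then 1 else 0 := by
  simp only [Splus, Matrix.sum_apply]
  rw [Finset.sum_eq_single i (fun b _ hb => by split_ifs <;> simp [hb]) (by simp)]
  split_ifs <;> simp_all [single_apply, Fin.ext_iff] <;> omega

lemma Ir_apply (M : ℕ) (i j : Fin M) :
    Ir M i j = if i = j ∧ (i : ℕ) ≠ 0 then 1 else 0 := by
  simp only [Ir, Matrix.sum_apply]
  rw [Finset.sum_eq_single i (fun b _ hb => by split_ifs <;> simp [hb]) (by simp)]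
  by_cases hij : i = j
  · subst hij; split_ifs <;> simp_all
  · split_ifs <;> simp_all

lemma Splus_eq_conjTranspose_Sminus (M : ℕ) : Splus M = (Sminus M)ᴴ := by
  ext i j
  rw [Splus_apply, conjTranspose_apply, Sminus_apply]
  split_ifs <;> simp

lemma Ir_eq_one_sub_single {M : ℕ} (hM : 0 < M) :
    Ir M = 1 - single ⟨0, hM⟩ ⟨0, hM⟩ 1 := by
  ext i j
  rw [Ir_apply, Matrix.sub_apply, one_apply, single_apply]
  split_ifs <;> simp_all [Fin.ext_iff]
  omega

lemma Sminus_eq_reindex_kronecker {K N : ℕ} (hK : 0 < K) (h : 2 * K = N) :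
    Sminus N = reindex (finProdFinEquiv.trans (finCongr h)) (finProdFinEquiv.trans (finCongr h))
      (1 ⊗ₖ Sminus K + sigma 0 1 ⊗ₖ single ⟨K - 1, by omega⟩ ⟨0, hK⟩ 1) := by
  ext i j
  obtain ⟨⟨a, r⟩, rfl⟩ := (finProdFinEquiv.trans (finCongr h)).surjective i
  obtain ⟨⟨b, s⟩, rfl⟩ := (finProdFinEquiv.trans (finCongr h)).surjective j
  have := r.isLt
  have := s.isLt
  fin_cases a <;> fin_cases b <;>
    simp [Sminus_apply, sigma, one_apply, single_apply, Fin.ext_iff]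
  all_goals (try split_ifs) <;> grind

def leadingQubitEquiv (n : ℕ) : Fin 2 × Fin (2 ^ n) ≃ Fin (2 ^ (n + 1)) :=
  finProdFinEquiv.trans (finCongr (pow_succ' 2 n).symm)

lemma kronList_succ (n : ℕ) (L : ℕ → Matrix (Fin 2) (Fin 2) ℂ) :
    kronList (n + 1) L =
      reindex (leadingQubitEquiv n) (leadingQubitEquiv n)
        (L 0 ⊗ₖ kronList n fun i => L (i + 1)) :=
  rfl

lemma kronList_one (n : ℕ) : kronList n (fun _ => 1) = 1 := by
  induction n with
  | zero => rfl
  | succ n ih => rw [kronList_succ, ih, one_kronecker_one, reindex_apply, submatrix_one_equiv]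

lemma conjTranspose_kronList (n : ℕ) (L : ℕ → Matrix (Fin 2) (Fin 2) ℂ) :
    (kronList n L)ᴴ = kronList n (fun i => (L i)ᴴ) := by
  induction n generalizing L with
  | zero => exact conjTranspose_one
  | succ n ih =>
    rw [kronList_succ, kronList_succ, conjTranspose_reindex, conjTranspose_kronecker, ih]

lemma sigma_conjTranspose (a b : Fin 2) : (sigma a b)ᴴ = sigma b a := by
  simp [sigma]

/-- The index of the basis state `|a a ⋯ a⟩` of `n` qubits. -/
def constBitsIndex (n : ℕ) (a : Fin 2) : Fin (2 ^ n) :=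
  ⟨a * (2 ^ n - 1), by fin_cases a <;> simp⟩

lemma constBitsIndex_zero (n : ℕ) : constBitsIndex n 0 = ⟨0, Nat.two_pow_pos n⟩ :=
  Fin.ext (by simp [constBitsIndex])

lemma constBitsIndex_one (n : ℕ) : constBitsIndex n 1 = ⟨2 ^ n - 1, by simp⟩ :=
  Fin.ext (by simp [constBitsIndex])

lemma kronList_sigma (n : ℕ) (a b : Fin 2) :
    kronList n (fun _ => sigma a b) = single (constBitsIndex n a) (constBitsIndex n b) 1 := by
  induction n with
  | zero => ext i j; fin_cases i; fin_cases j; simp [kronList, constBitsIndex]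
  | succ n ih =>
    have hidx (c : Fin 2) :
        leadingQubitEquiv n (c, constBitsIndex n c) = constBitsIndex (n + 1) c := by
      have := Nat.one_le_two_pow (n := n)
      fin_cases c <;> simp [leadingQubitEquiv, constBitsIndex, Fin.ext_iff, pow_succ]
      omega
    rw [kronList_succ, ih, sigma, single_kronecker_single, reindex_apply, submatrix_single_equiv]
    simp only [Equiv.symm_symm, hidx, mul_one]

/-- The factors of `I₂^{⊗(m−j−1)} ⊗ A ⊗ B^{⊗j}`. -/
def carryFactors (m j : ℕ) (A B : Matrix (Fin 2) (Fin 2) ℂ) (i : ℕ) :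
    Matrix (Fin 2) (Fin 2) ℂ :=
  if i < m - (j + 1) then 1 else if i = m - (j + 1) then A else B

lemma kronList_carryFactors_succ_of_lt {m j : ℕ} (hj : j < m) (A B : Matrix (Fin 2) (Fin 2) ℂ) :
    kronList (m + 1) (carryFactors (m + 1) j A B) =
      reindex (leadingQubitEquiv m) (leadingQubitEquiv m)
        (1 ⊗ₖ kronList m (carryFactors m j A B)) := by
  rw [kronList_succ]
  congr 3
  · simp [carryFactors]; omega
  · funext i
    exact if_congr (by omega) rfl (if_congr (by omega) rfl rfl)

lemma kronList_carryFactors_self (m : ℕ) (A B : Matrix (Fin 2) (Fin 2) ℂ) :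
    kronList (m + 1) (carryFactors (m + 1) m A B) =
      reindex (leadingQubitEquiv m) (leadingQubitEquiv m) (A ⊗ₖ kronList m fun _ => B) := by
  rw [kronList_succ]
  congr 3
  · simp [carryFactors]
  · funext i
    simp [carryFactors]

lemma sum_kronList_carryFactors_succ (m : ℕ) (A B : Matrix (Fin 2) (Fin 2) ℂ) :
    ∑ j ∈ Finset.range (m + 1), kronList (m + 1) (carryFactors (m + 1) j A B) =
      reindex (leadingQubitEquiv m) (leadingQubitEquiv m)
        (1 ⊗ₖ ∑ j ∈ Finset.range m, kronList m (carryFactors m j A B) +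
          A ⊗ₖ kronList m fun _ => B) := by
  rw [Finset.sum_range_succ, kronList_carryFactors_self,
    Finset.sum_congr rfl fun j hj => kronList_carryFactors_succ_of_lt (Finset.mem_range.1 hj) A B]
  ext i k
  simp [Matrix.sum_apply, Finset.mul_sum]

lemma Sminus_eq_sum_kronList (m : ℕ) :
    Sminus (2 ^ m) =
      ∑ j ∈ Finset.range m, kronList m (carryFactors m j (sigma 0 1) (sigma 1 0)) := by
  induction m with
  | zero =>
    ext i j
    simp [Sminus_apply]
  | succ m ih =>
    rw [sum_kronList_carryFactors_succ, ← ih, kronList_sigma, constBitsIndex_one,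
      constBitsIndex_zero]
    exact Sminus_eq_reindex_kronecker (Nat.two_pow_pos m) (pow_succ' 2 m).symm

lemma carryFactors_conjTranspose (m j : ℕ) (A B : Matrix (Fin 2) (Fin 2) ℂ) (i : ℕ) :
    (carryFactors m j A B i)ᴴ = carryFactors m j Aᴴ Bᴴ i := by
  simp only [carryFactors]
  split_ifs <;> simp

lemma Splus_eq_sum_kronList (m : ℕ) :
    Splus (2 ^ m) =
      ∑ j ∈ Finset.range m, kronList m (carryFactors m j (sigma 1 0) (sigma 0 1)) := by
  simp only [Splus_eq_conjTranspose_Sminus, Sminus_eq_sum_kronList, conjTranspose_sum,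
    conjTranspose_kronList, carryFactors_conjTranspose, sigma_conjTranspose]

theorem shift_matrix_qubit_decomposition_general (m : ℕ) :
    Sminus (2 ^ m) =
        (∑ j ∈ Finset.range m,
          kronList m (fun i =>
            if i < m - (j + 1) then 1
            else if i = m - (j + 1) then sigma 0 1 else sigma 1 0)) ∧
      Splus (2 ^ m) =
        (∑ j ∈ Finset.range m,
          kronList m (fun i =>
            if i < m - (j + 1) then 1
            else if i = m - (j + 1) then sigma 1 0 else sigma 0 1)) ∧
      Splus (2 ^ m) = (Sminus (2 ^ m))ᴴ ∧
      Ir (2 ^ m) = kronList m (fun _ => 1) - kronList m (fun _ => sigma 0 0) := by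
  refine ⟨Sminus_eq_sum_kronList m, Splus_eq_sum_kronList m,
    Splus_eq_conjTranspose_Sminus _, ?_⟩
  rw [kronList_one, kronList_sigma, constBitsIndex_zero]
  exact Ir_eq_one_sub_single _

/-- Multi-qubit (tensor-product) decompositions of the one-dimensional shift
operators: `S⁻ = Σ_{j=1}^{m} I₂^{⊗(m−j)} ⊗ σ₀₁ ⊗ σ₁₀^{⊗(j−1)}`,
`S⁺ = Σ_{j=1}^{m} I₂^{⊗(m−j)} ⊗ σ₁₀ ⊗ σ₀₁^{⊗(j−1)}`, `S⁺ = (S⁻)†`, and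
`I^r = I₂^{⊗m} − σ₀₀^{⊗m}`. -/
theorem shift_matrix_qubit_decomposition (m : ℕ) (hm : 1 ≤ m) :
    Sminus (2 ^ m) =
        (∑ j ∈ Finset.range m,
          kronList m (fun i =>
            if i < m - (j + 1) then 1
            else if i = m - (j + 1) then sigma 0 1 else sigma 1 0)) ∧
      Splus (2 ^ m) =
        (∑ j ∈ Finset.range m,
          kronList m (fun i =>
            if i < m - (j + 1) then 1
            else if i = m - (j + 1) then sigma 1 0 else sigma 0 1)) ∧
      Splus (2 ^ m) = (Sminus (2 ^ m))ᴴ ∧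
      Ir (2 ^ m) = kronList m (fun _ => 1) - kronList m (fun _ => sigma 0 0) :=
  shift_matrix_qubit_decomposition_general m
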